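/- (Lemma 5, uniqueness under the observability condition.) Let A ∈ ℝ^{n×n}, B ∈ ℝ^{n×m}, C ∈ ℝ^{p×n}. Assume rank(O_K) = n, assume the product matrix CB ∈ ℝ^{p×m} satisfies the RIP with constant δ_{2s} < 1, and assume the rank condition holds. Suppose (y_k)_{k=0}^K is generated noiselessly by (r̄_k)_{k=0}^K and s-sparse inputs (ū_k)_{k=0}^{K−1}: r̄_{k+1} = A r̄_k + B ū_k for k = 0,…,K−1 and y_k = C r̄_k for k = 0,…,K. Then these sequences are unique: if (r_k)_{k=0}^K and s-sparse (u_k)_{k=0}^{K−1} also satisfy r_{k+1} = A r_k + B u_k and y_k = C r_k for all k, then r_k = r̄_k for every k = 0,…,K and u_k = ū_k for every k = 0,…,K−1. -/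
import Mathlib


open Matrix Finset

noncomputable def l2norm {k : ℕ} (x : Fin k → ℝ) : ℝ := Real.sqrt (∑ i, (x i) ^ 2)

def l1norm {k : ℕ} (x : Fin k → ℝ) : ℝ := ∑ i, |x i|

def Sparse {k : ℕ} (s : ℕ) (x : Fin k → ℝ) : Prop :=
  (Finset.univ.filter fun i => x i ≠ 0).card ≤ s

def RIP {n m : ℕ} (s : ℕ) (δ : ℝ) (Φ : Matrix (Fin n) (Fin m) ℝ) : Prop :=
  ∀ c : Fin m → ℝ, Sparse s c →
    (1 - δ) * (l2norm c) ^ 2 ≤ (l2norm (Φ.mulVec c)) ^ 2 ∧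
    (l2norm (Φ.mulVec c)) ^ 2 ≤ (1 + δ) * (l2norm c) ^ 2

/-- The observability matrix O_K = [C; CA; …; CA^K], with block rows C·Aⁱ. -/
def obsMat {n p : ℕ} (A : Matrix (Fin n) (Fin n) ℝ) (C : Matrix (Fin p) (Fin n) ℝ) (K : ℕ) :
    Matrix (Fin (K + 1) × Fin p) (Fin n) ℝ :=
  fun q j => (C * A ^ (q.1 : ℕ)) q.2 j

/-- The rank condition rank([O_K  J_K^{2s}]) = n + rank(J_K^{2s}) for all
J_K^{2s}, in operational form: the only way a state x together with a sequence
of 2s-sparse inputs can produce zero output for all times 0,…,K is x = 0. -/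
def SparseRankCondition {n p m : ℕ} (A : Matrix (Fin n) (Fin n) ℝ) (B : Matrix (Fin n) (Fin m) ℝ)
    (C : Matrix (Fin p) (Fin n) ℝ) (K s : ℕ) : Prop :=
  ∀ (x : Fin n → ℝ) (v : Fin K → Fin m → ℝ),
    (∀ k, Sparse (2 * s) (v k)) →
    (∀ i : Fin (K + 1),
      (C * A ^ (i : ℕ)).mulVec x +
        ∑ j ∈ Finset.univ.filter (fun j : Fin K => (j : ℕ) < (i : ℕ)),
          (C * A ^ ((i : ℕ) - 1 - (j : ℕ)) * B).mulVec (v j) = 0) →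
    x = 0

lemma sparse_sub {k s : ℕ} {x y : Fin k → ℝ} (hx : Sparse s x) (hy : Sparse s y) :
    Sparse (2 * s) (x - y) := by
  have hsub : (Finset.univ.filter fun i => (x - y) i ≠ 0) ⊆
      (Finset.univ.filter fun i => x i ≠ 0) ∪ (Finset.univ.filter fun i => y i ≠ 0) := by
    intro i hi
    simp only [Finset.mem_filter, Finset.mem_union, Finset.mem_univ, true_and] at *
    by_contra h
    push_neg at h
    simp [Pi.sub_apply, h.1, h.2] at hi
  calc (Finset.univ.filter fun i => (x - y) i ≠ 0).card
      ≤ ((Finset.univ.filter fun i => x i ≠ 0) ∪ (Finset.univ.filter fun i => y i ≠ 0)).card :=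
        Finset.card_le_card hsub
    _ ≤ (Finset.univ.filter fun i => x i ≠ 0).card + (Finset.univ.filter fun i => y i ≠ 0).card :=
        Finset.card_union_le _ _
    _ ≤ s + s := add_le_add hx hy
    _ = 2 * s := (two_mul s).symm

lemma l2norm_sq {k : ℕ} (x : Fin k → ℝ) : l2norm x ^ 2 = ∑ i, (x i) ^ 2 := by
  unfold l2norm
  exact Real.sq_sqrt (Finset.sum_nonneg fun i _ => sq_nonneg _)

/-- Lemma 5 of the paper (uniqueness under the observability
condition). -/
theorem stmt10 {n p m K s : ℕ}
    (A : Matrix (Fin n) (Fin n) ℝ) (B : Matrix (Fin n) (Fin m) ℝ)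
    (C : Matrix (Fin p) (Fin n) ℝ)
    (hObs : (obsMat A C K).rank = n)
    (δ : ℝ) (hδ : δ < 1) (hCB : RIP (2 * s) δ (C * B))
    (hRank : SparseRankCondition A B C K s)
    (y : Fin (K + 1) → Fin p → ℝ)
    (rbar : Fin (K + 1) → Fin n → ℝ) (ubar : Fin K → Fin m → ℝ)
    (hubar : ∀ k, Sparse s (ubar k))
    (hdynbar : ∀ k : Fin K, rbar k.succ = A.mulVec (rbar k.castSucc) + B.mulVec (ubar k))
    (houtbar : ∀ k, y k = C.mulVec (rbar k))
    (r : Fin (K + 1) → Fin n → ℝ) (u : Fin K → Fin m → ℝ)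
    (hu : ∀ k, Sparse s (u k))
    (hdyn : ∀ k : Fin K, r k.succ = A.mulVec (r k.castSucc) + B.mulVec (u k))
    (hout : ∀ k, y k = C.mulVec (r k)) :
    (∀ k, r k = rbar k) ∧ ∀ k, u k = ubar k := by
  classical
  set e : Fin (K + 1) → Fin n → ℝ := fun k => r k - rbar k with he
  set w : Fin K → Fin m → ℝ := fun k => u k - ubar k with hwdef
  have hws : ∀ k, Sparse (2 * s) (w k) := fun k => sparse_sub (hu k) (hubar k)
  have hCe : ∀ k, C.mulVec (e k) = 0 := by
    intro k
    have : C.mulVec (r k) - C.mulVec (rbar k) = 0 := by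
      rw [← hout k, ← houtbar k]; simp
    simpa [he, Matrix.mulVec_sub] using this
  have hdyne : ∀ k : Fin K, e k.succ = A.mulVec (e k.castSucc) + B.mulVec (w k) := by
    intro k
    simp only [he, hwdef, hdyn k, hdynbar k, Matrix.mulVec_sub]
    funext i
    simp [Pi.sub_apply, Pi.add_apply]
    ring
  have rip_zero : ∀ v : Fin m → ℝ, Sparse (2 * s) v → (C * B).mulVec v = 0 → v = 0 := by
    intro v hv h0
    have h := (hCB v hv).1
    rw [h0] at h
    have hz : l2norm (0 : Fin p → ℝ) ^ 2 = 0 := by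
      simp [l2norm_sq]
    rw [hz, l2norm_sq] at h
    have hsum : ∑ i, (v i) ^ 2 = 0 := by
      have hnn : (0 : ℝ) ≤ ∑ i, (v i) ^ 2 := Finset.sum_nonneg fun i _ => sq_nonneg _
      nlinarith
    funext i
    have := (Finset.sum_eq_zero_iff_of_nonneg (fun i _ => sq_nonneg (v i))).mp hsum i
      (Finset.mem_univ i)
    exact pow_eq_zero_iff (n := 2) (by norm_num) |>.mp this
  -- key formula
  have key : ∀ i : ℕ, ∀ hi : i ≤ K, e ⟨i, Nat.lt_succ_of_le hi⟩ =
      (A ^ i).mulVec (e 0) +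
      ∑ j ∈ Finset.univ.filter (fun j : Fin K => (j : ℕ) < i),
        (A ^ (i - 1 - (j : ℕ)) * B).mulVec (w j) := by
    intro i
    induction i with
    | zero =>
      intro _
      have hfe : (Finset.univ.filter (fun j : Fin K => (j : ℕ) < 0)) = ∅ := by
        ext j; simp
      simp [hfe, show (⟨0, Nat.lt_succ_of_le (Nat.zero_le K)⟩ : Fin (K + 1)) = 0 from rfl]
    | succ i ih =>
      intro hi
      have hiK : i < K := hi
      have hi' : i ≤ K := le_of_lt hiK
      have hsucc : (⟨i + 1, Nat.lt_succ_of_le hi⟩ : Fin (K + 1)) = (⟨i, hiK⟩ : Fin K).succ := rfl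
      have hcast : (⟨i, Nat.lt_succ_of_le hi'⟩ : Fin (K + 1)) = (⟨i, hiK⟩ : Fin K).castSucc := rfl
      have hfilter : (Finset.univ.filter (fun j : Fin K => (j : ℕ) < i + 1)) =
          insert (⟨i, hiK⟩ : Fin K) (Finset.univ.filter (fun j : Fin K => (j : ℕ) < i)) := by
        ext j
        simp only [Finset.mem_filter, Finset.mem_insert, Finset.mem_univ, true_and,
          Nat.lt_succ_iff_lt_or_eq, Fin.ext_iff]
        tauto
      have hnotmem : (⟨i, hiK⟩ : Fin K) ∉
          (Finset.univ.filter (fun j : Fin K => (j : ℕ) < i)) := by simp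
      rw [hsucc, hdyne ⟨i, hiK⟩, ← hcast, ih hi', hfilter, Finset.sum_insert hnotmem,
        Matrix.mulVec_add]
      have h1 : A.mulVec ((A ^ i).mulVec (e 0)) = (A ^ (i + 1)).mulVec (e 0) := by
        rw [Matrix.mulVec_mulVec, ← pow_succ']
      have h2 : A.mulVec (∑ j ∈ Finset.univ.filter (fun j : Fin K => (j : ℕ) < i),
            (A ^ (i - 1 - (j : ℕ)) * B).mulVec (w j)) =
          ∑ j ∈ Finset.univ.filter (fun j : Fin K => (j : ℕ) < i),
            (A ^ (i + 1 - 1 - (j : ℕ)) * B).mulVec (w j) := by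
        rw [show A.mulVec (∑ j ∈ Finset.univ.filter (fun j : Fin K => (j : ℕ) < i),
            (A ^ (i - 1 - (j : ℕ)) * B).mulVec (w j)) = _ from
          map_sum A.mulVecLin (fun j : Fin K => (A ^ (i - 1 - (j : ℕ)) * B).mulVec (w j)) _]
        refine Finset.sum_congr rfl fun j hj => ?_
        simp only [Finset.mem_filter] at hj
        have hji : (j : ℕ) < i := hj.2
        have hpow : A * (A ^ (i - 1 - (j : ℕ)) * B) = A ^ (i + 1 - 1 - (j : ℕ)) * B := by
          rw [show i + 1 - 1 - (j : ℕ) = (i - 1 - (j : ℕ)) + 1 from by omega, pow_succ',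
            Matrix.mul_assoc]
        rw [Matrix.mulVecLin_apply, Matrix.mulVec_mulVec, hpow]
      have h3 : (A ^ (i + 1 - 1 - ((⟨i, hiK⟩ : Fin K) : ℕ)) * B).mulVec (w ⟨i, hiK⟩) =
          B.mulVec (w ⟨i, hiK⟩) := by
        have : i + 1 - 1 - i = 0 := by omega
        simp [this]
      rw [h1, h2, h3]
      abel
  -- zero output condition for hRank
  have hzero : ∀ i : Fin (K + 1),
      (C * A ^ (i : ℕ)).mulVec (e 0) +
        ∑ j ∈ Finset.univ.filter (fun j : Fin K => (j : ℕ) < (i : ℕ)),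
          (C * A ^ ((i : ℕ) - 1 - (j : ℕ)) * B).mulVec (w j) = 0 := by
    intro i
    have hk := key (i : ℕ) (Nat.lt_succ_iff.mp i.2)
    have hi : (⟨(i : ℕ), Nat.lt_succ_of_le (Nat.lt_succ_iff.mp i.2)⟩ : Fin (K + 1)) = i :=
      Fin.ext rfl
    rw [hi] at hk
    have := hCe i
    rw [hk, Matrix.mulVec_add] at this
    rw [show C.mulVec (∑ j ∈ Finset.univ.filter (fun j : Fin K => (j : ℕ) < (i : ℕ)),
        (A ^ ((i : ℕ) - 1 - (j : ℕ)) * B).mulVec (w j)) = _ from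
      map_sum C.mulVecLin (fun j : Fin K => (A ^ ((i : ℕ) - 1 - (j : ℕ)) * B).mulVec (w j)) _] at this
    simp only [Matrix.mulVecLin_apply, Matrix.mulVec_mulVec, ← Matrix.mul_assoc] at this
    exact this
  have he0 : e 0 = 0 := hRank (e 0) w hws hzero
  -- w is zero whenever e at castSucc is zero
  have wzero : ∀ k : Fin K, e k.castSucc = 0 → w k = 0 := by
    intro k hk
    have h1 : e k.succ = B.mulVec (w k) := by
      rw [hdyne k, hk]
      simp
    have h2 : (C * B).mulVec (w k) = 0 := by
      rw [← Matrix.mulVec_mulVec, ← h1, hCe]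
    exact rip_zero (w k) (hws k) h2
  have ezero : ∀ i : ℕ, ∀ hi : i ≤ K, e ⟨i, Nat.lt_succ_of_le hi⟩ = 0 := by
    intro i
    induction i with
    | zero => intro _; exact he0
    | succ i ih =>
      intro hi
      have hiK : i < K := hi
      have hi' : i ≤ K := le_of_lt hiK
      have hcast : (⟨i, Nat.lt_succ_of_le hi'⟩ : Fin (K + 1)) = (⟨i, hiK⟩ : Fin K).castSucc := rfl
      have hec : e (⟨i, hiK⟩ : Fin K).castSucc = 0 := by rw [← hcast]; exact ih hi'
      have hw0 := wzero ⟨i, hiK⟩ hec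
      have hsucc : (⟨i + 1, Nat.lt_succ_of_le hi⟩ : Fin (K + 1)) = (⟨i, hiK⟩ : Fin K).succ := rfl
      rw [hsucc, hdyne ⟨i, hiK⟩, hec, hw0]
      simp
  have ezall : ∀ k : Fin (K + 1), e k = 0 := by
    intro k
    have := ezero (k : ℕ) (Nat.lt_succ_iff.mp k.2)
    rwa [show (⟨(k : ℕ), _⟩ : Fin (K + 1)) = k from Fin.ext rfl] at this
  constructor
  · intro k
    have := ezall k
    simpa [he, sub_eq_zero] using this
  · intro k
    have hec : e k.castSucc = 0 := ezall _
    have := wzero k hec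
    simpa [hwdef, sub_eq_zero] using this
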